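/- arXiv:1307.4029 — 2 statements merged into one kernel-verified Lean document; each statement's English description precedes it below -/
import Mathlib

section
/- Let I_B and I_C be NA-homogeneous toric ideals with simple columns (b^α_β; c^α_γ). A Graver generator M̄^g_{β,γ} is a product of simple generators if and only if the Graver column m^g_{β,γ} = (b^g_β; c^g_γ) is a non-negative integral combination of the simple columns. -/
open MvPolynomial
open scoped TensorProduct Classical

noncomputable section

variable {K : Type*} [Field K] {d h : ℕ}

/-- The map `φ_S : K[z] → K[x] ⊗ K[y]`, `z^α_{β,γ} ↦ x^α_β ⊗ y^α_γ`. -/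
def phiS (K : Type*) [Field K] (dx dy : Fin d → ℕ) :
    MvPolynomial (Σ α : Fin d, Fin (dx α) × Fin (dy α)) K →ₐ[K]
      (MvPolynomial (Σ α : Fin d, Fin (dx α)) K ⊗[K]
        MvPolynomial (Σ α : Fin d, Fin (dy α)) K) :=
  aeval (fun s => (X ⟨s.1, s.2.1⟩ : MvPolynomial (Σ α : Fin d, Fin (dx α)) K) ⊗ₜ[K]
    (X ⟨s.1, s.2.2⟩ : MvPolynomial (Σ α : Fin d, Fin (dy α)) K))

/-- The composite map `(π_I ⊗ π_J) ∘ φ_S : K[z] → R ⊗ S`. -/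
def psiTFP (K : Type*) [Field K] (dx dy : Fin d → ℕ)
    (I : Ideal (MvPolynomial (Σ α : Fin d, Fin (dx α)) K))
    (J : Ideal (MvPolynomial (Σ α : Fin d, Fin (dy α)) K)) :
    MvPolynomial (Σ α : Fin d, Fin (dx α) × Fin (dy α)) K →ₐ[K]
      ((MvPolynomial (Σ α : Fin d, Fin (dx α)) K ⧸ I) ⊗[K]
        (MvPolynomial (Σ α : Fin d, Fin (dy α)) K ⧸ J)) :=
  (Algebra.TensorProduct.map (Ideal.Quotient.mkₐ K I) (Ideal.Quotient.mkₐ K J)).comp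
    (phiS K dx dy)

/-- The toric fiber product `I ×_A J = ker((π_I ⊗ π_J) ∘ φ_S)`. -/
def TFP (K : Type*) [Field K] (dx dy : Fin d → ℕ)
    (I : Ideal (MvPolynomial (Σ α : Fin d, Fin (dx α)) K))
    (J : Ideal (MvPolynomial (Σ α : Fin d, Fin (dy α)) K)) :
    Ideal (MvPolynomial (Σ α : Fin d, Fin (dx α) × Fin (dy α)) K) :=
  RingHom.ker (psiTFP K dx dy I J).toRingHom


/-- The toric ideal of a vector configuration `D : σ → V`. -/
def toricIdeal (K : Type*) [Field K] {σ V : Type*} [Fintype σ] [AddCommGroup V]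
    (D : σ → V) : Ideal (MvPolynomial σ K) :=
  Ideal.span {p | ∃ u v : σ →₀ ℕ, (∑ s, ((u s : ℤ) - (v s : ℤ)) • D s) = 0 ∧
    p = monomial u 1 - monomial v 1}

/-- The integer kernel of the configuration `a`. -/
def kerA (a : Fin d → Fin h → ℤ) : Set (Fin d → ℤ) :=
  {c | ∑ α, c α • a α = 0}

/-- `u` is sign-consistent with `c` if `u α * c α ≥ 0` for all `α`. -/
def SignConsistent (u c : Fin d → ℤ) : Prop := ∀ α, 0 ≤ u α * c α

/-- A Graver basis element: a primitive element of the kernel. -/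
def IsPrimitive (a : Fin d → Fin h → ℤ) (c : Fin d → ℤ) : Prop :=
  c ∈ kerA a ∧ c ≠ 0 ∧
    ¬ ∃ u v : Fin d → ℤ, u ∈ kerA a ∧ v ∈ kerA a ∧ u ≠ 0 ∧ v ≠ 0 ∧
      SignConsistent u c ∧ SignConsistent v c ∧ c = u + v

variable {h1 h2 : ℕ} {dx dy : Fin d → ℕ}

/-- The Graver generator `M̄^g_{β,γ}`, the image of the Graver monomial in
`K[ℕB] ⊗ K[ℕC]`, encoded by the exponent vectors `mx`, `my` of its two factors. -/
def graverGen (K : Type*) [Field K] (b : (α : Fin d) → Fin (dx α) → Fin h1 → ℤ)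
    (c : (α : Fin d) → Fin (dy α) → Fin h2 → ℤ)
    (mx : (Σ α : Fin d, Fin (dx α)) →₀ ℕ) (my : (Σ α : Fin d, Fin (dy α)) →₀ ℕ) :
    (MvPolynomial (Σ α : Fin d, Fin (dx α)) K ⧸
        toricIdeal K (fun s : Σ α : Fin d, Fin (dx α) => b s.1 s.2)) ⊗[K]
      (MvPolynomial (Σ α : Fin d, Fin (dy α)) K ⧸
        toricIdeal K (fun s : Σ α : Fin d, Fin (dy α) => c s.1 s.2)) :=
  (Ideal.Quotient.mk _ (monomial mx 1)) ⊗ₜ[K] (Ideal.Quotient.mk _ (monomial my 1))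

/-- The simple column `(b^α_β ; c^α_γ)` indexed by `s = (α, (β, γ))`. -/
def simpleCol (b : (α : Fin d) → Fin (dx α) → Fin h1 → ℤ)
    (c : (α : Fin d) → Fin (dy α) → Fin h2 → ℤ)
    (s : Σ α : Fin d, Fin (dx α) × Fin (dy α)) : (Fin h1 → ℤ) × (Fin h2 → ℤ) :=
  (b s.1 s.2.1, c s.1 s.2.2)

/-- The Graver column `m^g_{β,γ} = (b^g_β ; c^g_γ)`. -/
def graverCol (b : (α : Fin d) → Fin (dx α) → Fin h1 → ℤ)
    (c : (α : Fin d) → Fin (dy α) → Fin h2 → ℤ)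
    (mx : (Σ α : Fin d, Fin (dx α)) →₀ ℕ) (my : (Σ α : Fin d, Fin (dy α)) →₀ ℕ) :
    (Fin h1 → ℤ) × (Fin h2 → ℤ) :=
  (∑ s, mx s • b s.1 s.2, ∑ s, my s • c s.1 s.2)

/-! In `K[σ] ⧸ I_D` two monomials `x^u`, `x^v` agree exactly when their degrees `Σ u_s D_s`,
`Σ v_s D_s` agree: the binomial `x^u - x^v` of two equal-degree monomials is a generator of `I_D`,
and conversely `I_D` lies in the kernel of the degree map `x^u ↦ t^{Σ u_s D_s}` into the group
algebra `K[V]`. Tensoring two such degree maps into `K[V × W]` shows that `x̄^u ⊗ ȳ^v` determines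
the pair of degrees. A product of simple generators `ψ(z^m)` is `x̄^{m_x} ⊗ ȳ^{m_y}`, where `m_x`,
`m_y` are the marginals of `m`, of degree `Σ m_s (b_s ; c_s)`; so it equals `M̄^g_{β,γ}` exactly
when `m` exhibits the Graver column as a combination of the simple columns. -/

section ToricQuotient

variable (K : Type*) [Field K] {σ V : Type*} [AddCommGroup V] (D : σ → V)

def degreeHom : MvPolynomial σ K →ₐ[K] AddMonoidAlgebra K V :=
  AddMonoidAlgebra.mapDomainAlgHom K K (Finsupp.linearCombination ℕ D).toAddMonoidHom

variable [Fintype σ]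

lemma degreeHom_monomial (u : σ →₀ ℕ) :
    degreeHom K D (monomial u 1) = AddMonoidAlgebra.single (∑ s, u s • D s) 1 := by
  have hsum : Finsupp.linearCombination ℕ D u = ∑ s, u s • D s := by
    rw [Finsupp.linearCombination_apply, Finsupp.sum_fintype _ _ fun s => zero_smul ℕ (D s)]
  rw [← hsum]
  exact AddMonoidAlgebra.mapDomain_single

lemma toricIdeal_le_ker_degreeHom : toricIdeal K D ≤ RingHom.ker (degreeHom K D) := by
  rw [toricIdeal, Ideal.span_le]
  rintro _ ⟨u, v, huv, rfl⟩
  simp only [sub_smul, Finset.sum_sub_distrib, sub_eq_zero, natCast_zsmul] at huv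
  rw [SetLike.mem_coe, RingHom.mem_ker, map_sub, degreeHom_monomial, degreeHom_monomial, huv,
    sub_self]

def toricDegree : (MvPolynomial σ K ⧸ toricIdeal K D) →ₐ[K] AddMonoidAlgebra K V :=
  Ideal.Quotient.liftₐ _ (degreeHom K D) fun _ hp => toricIdeal_le_ker_degreeHom K D hp

lemma toricDegree_mk_monomial (u : σ →₀ ℕ) :
    toricDegree K D (Ideal.Quotient.mk _ (monomial u 1)) =
      AddMonoidAlgebra.single (∑ s, u s • D s) 1 :=
  degreeHom_monomial K D u

lemma mk_monomial_eq_mk_monomial_iff (u v : σ →₀ ℕ) :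
    Ideal.Quotient.mk (toricIdeal K D) (monomial u 1) =
        Ideal.Quotient.mk (toricIdeal K D) (monomial v 1) ↔
      ∑ s, u s • D s = ∑ s, v s • D s := by
  refine ⟨fun h => ?_, fun h => Ideal.Quotient.eq.mpr (Ideal.subset_span ⟨u, v, ?_, rfl⟩)⟩
  · have := congrArg (toricDegree K D) h
    rwa [toricDegree_mk_monomial, toricDegree_mk_monomial,
      AddMonoidAlgebra.single_left_inj one_ne_zero] at this
  · simpa only [sub_smul, Finset.sum_sub_distrib, sub_eq_zero, natCast_zsmul] using h

variable {τ W : Type*} [Fintype τ] [AddCommGroup W] (E : τ → W)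

def tensorDegree :
    (MvPolynomial σ K ⧸ toricIdeal K D) ⊗[K] (MvPolynomial τ K ⧸ toricIdeal K E) →ₐ[K]
      AddMonoidAlgebra K (V × W) :=
  Algebra.TensorProduct.productMap
    ((AddMonoidAlgebra.mapDomainAlgHom K K (AddMonoidHom.inl V W)).comp (toricDegree K D))
    ((AddMonoidAlgebra.mapDomainAlgHom K K (AddMonoidHom.inr V W)).comp (toricDegree K E))

lemma tensorDegree_mk_monomial_tmul (u : σ →₀ ℕ) (v : τ →₀ ℕ) :
    tensorDegree K D E
        (Ideal.Quotient.mk _ (monomial u 1) ⊗ₜ Ideal.Quotient.mk _ (monomial v 1)) =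
      AddMonoidAlgebra.single (∑ s, u s • D s, ∑ t, v t • E t) 1 := by
  rw [tensorDegree, Algebra.TensorProduct.productMap_apply_tmul, AlgHom.comp_apply,
    AlgHom.comp_apply, toricDegree_mk_monomial, toricDegree_mk_monomial,
    AddMonoidAlgebra.mapDomainAlgHom_apply, AddMonoidAlgebra.mapDomainAlgHom_apply,
    AddMonoidAlgebra.mapDomain_single, AddMonoidAlgebra.mapDomain_single,
    AddMonoidAlgebra.single_mul_single, one_mul, AddMonoidHom.inl_apply, AddMonoidHom.inr_apply,
    Prod.mk_add_mk, add_zero, zero_add]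

lemma mk_monomial_tmul_eq_iff (u u' : σ →₀ ℕ) (v v' : τ →₀ ℕ) :
    Ideal.Quotient.mk (toricIdeal K D) (monomial u 1) ⊗ₜ[K]
          Ideal.Quotient.mk (toricIdeal K E) (monomial v 1) =
        Ideal.Quotient.mk (toricIdeal K D) (monomial u' 1) ⊗ₜ[K]
          Ideal.Quotient.mk (toricIdeal K E) (monomial v' 1) ↔
      (∑ s, u s • D s, ∑ t, v t • E t) = (∑ s, u' s • D s, ∑ t, v' t • E t) := by
  refine ⟨fun h => ?_, fun h => ?_⟩
  · have := congrArg (tensorDegree K D E) h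
    rwa [tensorDegree_mk_monomial_tmul, tensorDegree_mk_monomial_tmul,
      AddMonoidAlgebra.single_left_inj one_ne_zero] at this
  · obtain ⟨hD, hE⟩ := Prod.mk.inj h
    rw [(mk_monomial_eq_mk_monomial_iff K D u u').mpr hD,
      (mk_monomial_eq_mk_monomial_iff K E v v').mpr hE]

end ToricQuotient

open Algebra.TensorProduct in
lemma aeval_X_tmul_X_monomial (K : Type*) [Field K] {ι σ τ : Type*} (f : ι → σ) (g : ι → τ)
    (m : ι →₀ ℕ) :
    aeval (fun i => (X (f i) : MvPolynomial σ K) ⊗ₜ[K] (X (g i) : MvPolynomial τ K))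
        (monomial m 1 : MvPolynomial ι K) =
      monomial (m.mapDomain f) 1 ⊗ₜ monomial (m.mapDomain g) 1 := by
  have hsplit : ∀ (p : MvPolynomial σ K) (q : MvPolynomial τ K),
      p ⊗ₜ[K] q = includeLeft (R := K) (S := K) p * includeRight q := by
    simp [tmul_mul_tmul]
  rw [← rename_monomial, ← rename_monomial, rename_eq_aeval, rename_eq_aeval, hsplit,
    comp_aeval_apply, comp_aeval_apply]
  simp only [hsplit, aeval_monomial, map_one, one_mul, mul_pow, Finsupp.prod_mul, Function.comp]

lemma psiTFP_monomial (K : Type*) [Field K]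
    (I : Ideal (MvPolynomial (Σ α : Fin d, Fin (dx α)) K))
    (J : Ideal (MvPolynomial (Σ α : Fin d, Fin (dy α)) K))
    (mz : (Σ α : Fin d, Fin (dx α) × Fin (dy α)) →₀ ℕ) :
    psiTFP K dx dy I J (monomial mz 1) =
      Ideal.Quotient.mk I (monomial (mz.mapDomain (Sigma.map id fun _ => Prod.fst)) 1) ⊗ₜ
        Ideal.Quotient.mk J (monomial (mz.mapDomain (Sigma.map id fun _ => Prod.snd)) 1) := by
  have hphiS : phiS K dx dy (monomial mz 1) =
      monomial (mz.mapDomain (Sigma.map id fun _ => Prod.fst)) 1 ⊗ₜ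
        monomial (mz.mapDomain (Sigma.map id fun _ => Prod.snd)) 1 :=
    aeval_X_tmul_X_monomial K _ _ mz
  rw [psiTFP, AlgHom.comp_apply, hphiS, Algebra.TensorProduct.map_tmul, Ideal.Quotient.mkₐ_eq_mk,
    Ideal.Quotient.mkₐ_eq_mk]

lemma sum_mapDomain_nsmul {σ τ V : Type*} [Fintype σ] [Fintype τ] [AddCommMonoid V]
    (f : σ → τ) (D : τ → V) (u : σ →₀ ℕ) :
    ∑ t, u.mapDomain f t • D t = ∑ s, u s • D (f s) := by
  simpa only [Finsupp.linearCombination_apply, Finsupp.sum_fintype, zero_smul, implies_true,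
    Function.comp_apply]
    using Finsupp.linearCombination_mapDomain ℕ f u (v' := D)

lemma sum_nsmul_simpleCol (b : (α : Fin d) → Fin (dx α) → Fin h1 → ℤ)
    (c : (α : Fin d) → Fin (dy α) → Fin h2 → ℤ) (mz : (Σ α : Fin d, Fin (dx α) × Fin (dy α)) → ℕ) :
    ∑ s, mz s • simpleCol b c s = (∑ s, mz s • b s.1 s.2.1, ∑ s, mz s • c s.1 s.2.2) := by
  ext <;> simp [simpleCol, Prod.fst_sum, Prod.snd_sum]

theorem graverGen_product_of_simple_iff_general (K : Type*) [Field K]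
    (b : (α : Fin d) → Fin (dx α) → Fin h1 → ℤ)
    (c : (α : Fin d) → Fin (dy α) → Fin h2 → ℤ)
    (mx : (Σ α : Fin d, Fin (dx α)) →₀ ℕ) (my : (Σ α : Fin d, Fin (dy α)) →₀ ℕ) :
    (∃ mz : (Σ α : Fin d, Fin (dx α) × Fin (dy α)) →₀ ℕ,
        graverGen K b c mx my =
          psiTFP K dx dy (toricIdeal K (fun s : Σ α : Fin d, Fin (dx α) => b s.1 s.2))
            (toricIdeal K (fun s : Σ α : Fin d, Fin (dy α) => c s.1 s.2))
            (monomial mz 1)) ↔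
      (∃ mz : (Σ α : Fin d, Fin (dx α) × Fin (dy α)) → ℕ,
        graverCol b c mx my = ∑ s, mz s • simpleCol b c s) := by
  simp only [graverGen, psiTFP_monomial, mk_monomial_tmul_eq_iff, sum_mapDomain_nsmul,
    graverCol, sum_nsmul_simpleCol]
  exact Finsupp.equivFunOnFinite.exists_congr_left

/-- A Graver generator `M̄^g_{β,γ}` is a product of simple generators if and only if
the Graver column `m^g_{β,γ}` is a non-negative integral combination of the simple
columns. -/
theorem graverGen_product_of_simple_iff (K : Type*) [Field K] {h : ℕ}
    (a : Fin d → Fin h → ℤ)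
    (b : (α : Fin d) → Fin (dx α) → Fin h1 → ℤ)
    (c : (α : Fin d) → Fin (dy α) → Fin h2 → ℤ)
    (B : Matrix (Fin h) (Fin h1) ℤ) (C : Matrix (Fin h) (Fin h2) ℤ)
    (hb : ∀ (α : Fin d) (β : Fin (dx α)), B.mulVec (b α β) = a α)
    (hc : ∀ (α : Fin d) (γ : Fin (dy α)), C.mulVec (c α γ) = a α)
    (g : Fin d → ℤ) (hg : IsPrimitive a g)
    (mx : (Σ α : Fin d, Fin (dx α)) →₀ ℕ) (my : (Σ α : Fin d, Fin (dy α)) →₀ ℕ)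
    (hmx : ∀ α : Fin d, (∑ β : Fin (dx α), mx ⟨α, β⟩) = (g α).toNat)
    (hmy : ∀ α : Fin d, (∑ γ : Fin (dy α), my ⟨α, γ⟩) = (-(g α)).toNat) :
    (∃ mz : (Σ α : Fin d, Fin (dx α) × Fin (dy α)) →₀ ℕ,
        graverGen K b c mx my =
          psiTFP K dx dy (toricIdeal K (fun s : Σ α : Fin d, Fin (dx α) => b s.1 s.2))
            (toricIdeal K (fun s : Σ α : Fin d, Fin (dy α) => c s.1 s.2))
            (monomial mz 1)) ↔
      (∃ mz : (Σ α : Fin d, Fin (dx α) × Fin (dy α)) → ℕ,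
        graverCol b c mx my = ∑ s, mz s • simpleCol b c s) :=
  graverGen_product_of_simple_iff_general K b c mx my
end
end

section
/- In the setting of toric ideals I_B and I_C, if for a Graver basis element g and index sequence β there exists a Graver index sequence β′ for −g with b^g_β = b^{−g}_{β′}, then for every γ the Graver generator M̄^g_{β,γ} is a product of simple generators. -/
open MvPolynomial
open scoped TensorProduct Classical

noncomputable section

variable {K : Type*} [Field K] {d h : ℕ}

variable {h1 h2 : ℕ} {dx dy : Fin d → ℕ}

/-!
Since `b^{-g}_{β'} = b^g_β`, the monomials `x^β` and `x^{β'}` agree modulo `I_B`, so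
`M̄^g_{β,γ} = x^{β'} ⊗ y^γ`. For each `α`, both `β'` and `γ` consist of `(-g)_α` indices, so they
can be paired off into simple indices `(α, β'_j, γ_j)`; the product of the corresponding simple
generators is `x^{β'} ⊗ y^γ`.
-/

section Margins

open Finset

lemma card_filter_sigma_fst_eq {X : Type*} [Fintype X] (u : X → ℕ) (x : X) :
    #{i : Σ x, Fin (u x) | i.1 = x} = u x := by
  have : ({i : Σ x, Fin (u x) | i.1 = x} : Finset _) = ({x} : Finset X).sigma fun _ => univ := by
    ext ⟨x', k⟩
    simp
  simp [this]

theorem exists_table_with_margins {X Y : Type*} [Fintype X] [Fintype Y]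
    (u : X → ℕ) (v : Y → ℕ) (huv : ∑ x, u x = ∑ y, v y) :
    ∃ w : X → Y → ℕ, (∀ x, ∑ y, w x y = u x) ∧ (∀ y, ∑ x, w x y = v y) := by
  -- Any bijection between `u x` copies of each `x` and `v y` copies of each `y` is such a table.
  obtain ⟨e⟩ : Nonempty ((Σ x, Fin (u x)) ≃ Σ y, Fin (v y)) :=
    Fintype.card_eq.mp (by simpa using huv)
  refine ⟨fun x y => #{i | i.1 = x ∧ (e i).1 = y}, fun x => ?_, fun y => ?_⟩
  · rw [← card_filter_sigma_fst_eq u x, card_eq_sum_card_fiberwise (f := fun i => (e i).1)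
      (t := univ) fun _ _ => mem_univ _]
    simp only [filter_filter]
  · rw [← card_filter_sigma_fst_eq v y, ← card_equiv e (s := {i | (e i).1 = y}) (by simp),
      card_eq_sum_card_fiberwise (f := Sigma.fst) (t := univ) fun _ _ => mem_univ _]
    simp only [filter_filter, and_comm]

lemma Finsupp.mapDomain_sigma_apply {ι : Type*} [Fintype ι] {Z X : ι → Type*}
    [∀ i, Fintype (Z i)] (f : ∀ i, Z i → X i) (w : (Σ i, Z i) →₀ ℕ) (i : ι) (x : X i) :
    w.mapDomain (fun s => (⟨s.1, f s.1 s.2⟩ : Σ i, X i)) ⟨i, x⟩ =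
      ∑ z with f i z = x, w ⟨i, z⟩ := by
  rw [Finsupp.mapDomain, Finsupp.sum_fintype _ _ (by simp), Finsupp.finsetSum_apply,
    Fintype.sum_sigma, Finset.sum_eq_single i]
  · simp [Finsupp.single_apply, Finset.sum_ite]
  · intro j _ hj
    exact Finset.sum_eq_zero fun z _ => Finsupp.single_eq_of_ne fun h => hj (congrArg Sigma.fst h).symm
  · simp

theorem exists_sigma_prod_with_margins {ι : Type*} [Fintype ι] {X Y : ι → Type*}
    [∀ i, Fintype (X i)] [∀ i, Fintype (Y i)]
    (u : (Σ i, X i) →₀ ℕ) (v : (Σ i, Y i) →₀ ℕ) (huv : ∀ i, ∑ x, u ⟨i, x⟩ = ∑ y, v ⟨i, y⟩) :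
    ∃ w : (Σ i, X i × Y i) →₀ ℕ, w.mapDomain (fun s => (⟨s.1, s.2.1⟩ : Σ i, X i)) = u ∧
      w.mapDomain (fun s => (⟨s.1, s.2.2⟩ : Σ i, Y i)) = v := by
  choose W hWu hWv using fun i => exists_table_with_margins _ _ (huv i)
  refine ⟨Finsupp.equivFunOnFinite.symm fun s => W s.1 s.2.1 s.2.2, ?_, ?_⟩ <;> ext ⟨i, x⟩
  · rw [Finsupp.mapDomain_sigma_apply (fun _ => Prod.fst), ← hWu]
    simp [sum_filter, Fintype.sum_prod_type]
  · rw [Finsupp.mapDomain_sigma_apply (fun _ => Prod.snd), ← hWv]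
    simp [sum_filter, Fintype.sum_prod_type]

end Margins

lemma phiS_monomial (m : (Σ α : Fin d, Fin (dx α) × Fin (dy α)) →₀ ℕ) :
    phiS K dx dy (monomial m 1) =
      monomial (m.mapDomain fun s => (⟨s.1, s.2.1⟩ : Σ α : Fin d, Fin (dx α))) 1 ⊗ₜ[K]
        monomial (m.mapDomain fun s => (⟨s.1, s.2.2⟩ : Σ α : Fin d, Fin (dy α))) 1 := by
  induction m using Finsupp.induction_linear with
  | zero => simp [Algebra.TensorProduct.one_def]
  | add m n hm hn =>
    rw [← one_mul (1 : K), ← monomial_mul, map_mul, hm, hn, Algebra.TensorProduct.tmul_mul_tmul,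
      monomial_mul, monomial_mul, Finsupp.mapDomain_add, Finsupp.mapDomain_add]
  | single s k => simp [phiS, ← X_pow_eq_monomial]

lemma psiTFP_monomial_s17 (b : (α : Fin d) → Fin (dx α) → Fin h1 → ℤ)
    (c : (α : Fin d) → Fin (dy α) → Fin h2 → ℤ)
    (m : (Σ α : Fin d, Fin (dx α) × Fin (dy α)) →₀ ℕ) :
    psiTFP K dx dy (toricIdeal K (fun s : Σ α : Fin d, Fin (dx α) => b s.1 s.2))
        (toricIdeal K (fun s : Σ α : Fin d, Fin (dy α) => c s.1 s.2)) (monomial m 1) =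
      graverGen K b c (m.mapDomain fun s => ⟨s.1, s.2.1⟩) (m.mapDomain fun s => ⟨s.1, s.2.2⟩) := by
  rw [psiTFP, AlgHom.comp_apply, phiS_monomial, Algebra.TensorProduct.map_tmul]
  rfl

lemma monomial_sub_monomial_mem_toricIdeal {σ V : Type*} [Fintype σ] [AddCommGroup V]
    (D : σ → V) {u v : σ →₀ ℕ} (huv : ∑ s, u s • D s = ∑ s, v s • D s) :
    monomial u (1 : K) - monomial v 1 ∈ toricIdeal K D :=
  Ideal.subset_span ⟨u, v, by simp [sub_smul, Finset.sum_sub_distrib, huv], rfl⟩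

lemma graverGen_eq_of_sum_smul_eq (b : (α : Fin d) → Fin (dx α) → Fin h1 → ℤ)
    (c : (α : Fin d) → Fin (dy α) → Fin h2 → ℤ) {mx mx' : (Σ α : Fin d, Fin (dx α)) →₀ ℕ}
    (my : (Σ α : Fin d, Fin (dy α)) →₀ ℕ)
    (hmx : ∑ s, mx s • b s.1 s.2 = ∑ s, mx' s • b s.1 s.2) :
    graverGen K b c mx my = graverGen K b c mx' my := by
  rw [graverGen, graverGen, Ideal.Quotient.eq.mpr (monomial_sub_monomial_mem_toricIdeal _ hmx)]

theorem graverGen_product_of_simple_of_symmetric_general (K : Type*) [Field K]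
    (b : (α : Fin d) → Fin (dx α) → Fin h1 → ℤ)
    (c : (α : Fin d) → Fin (dy α) → Fin h2 → ℤ)
    (g : Fin d → ℤ)
    (mx : (Σ α : Fin d, Fin (dx α)) →₀ ℕ)
    (hsym : ∃ mx' : (Σ α : Fin d, Fin (dx α)) →₀ ℕ,
      (∀ α : Fin d, (∑ β : Fin (dx α), mx' ⟨α, β⟩) = (-(g α)).toNat) ∧
      (∑ s, mx' s • b s.1 s.2) = (∑ s, mx s • b s.1 s.2)) :
    ∀ my : (Σ α : Fin d, Fin (dy α)) →₀ ℕ,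
      (∀ α : Fin d, (∑ γ : Fin (dy α), my ⟨α, γ⟩) = (-(g α)).toNat) →
      ∃ mz : (Σ α : Fin d, Fin (dx α) × Fin (dy α)) →₀ ℕ,
        graverGen K b c mx my =
          psiTFP K dx dy (toricIdeal K (fun s : Σ α : Fin d, Fin (dx α) => b s.1 s.2))
            (toricIdeal K (fun s : Σ α : Fin d, Fin (dy α) => c s.1 s.2))
            (monomial mz 1) := by
  intro my hmy
  obtain ⟨mx', hmx', hbx'⟩ := hsym
  obtain ⟨mz, hmzx, hmzy⟩ :=
    exists_sigma_prod_with_margins mx' my fun α => (hmx' α).trans (hmy α).symm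
  refine ⟨mz, ?_⟩
  rw [psiTFP_monomial_s17, hmzx, hmzy, graverGen_eq_of_sum_smul_eq b c my hbx'.symm]

/-- If there is a Graver index sequence `β'` for `−g` with `b^g_β = b^{−g}_{β'}`, then
for every `γ` the Graver generator `M̄^g_{β,γ}` is a product of simple generators. -/
theorem graverGen_product_of_simple_of_symmetric (K : Type*) [Field K] {h : ℕ}
    (a : Fin d → Fin h → ℤ)
    (b : (α : Fin d) → Fin (dx α) → Fin h1 → ℤ)
    (c : (α : Fin d) → Fin (dy α) → Fin h2 → ℤ)
    (B : Matrix (Fin h) (Fin h1) ℤ) (C : Matrix (Fin h) (Fin h2) ℤ)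
    (hb : ∀ (α : Fin d) (β : Fin (dx α)), B.mulVec (b α β) = a α)
    (hc : ∀ (α : Fin d) (γ : Fin (dy α)), C.mulVec (c α γ) = a α)
    (g : Fin d → ℤ) (hg : IsPrimitive a g)
    (mx : (Σ α : Fin d, Fin (dx α)) →₀ ℕ)
    (hmx : ∀ α : Fin d, (∑ β : Fin (dx α), mx ⟨α, β⟩) = (g α).toNat)
    (hsym : ∃ mx' : (Σ α : Fin d, Fin (dx α)) →₀ ℕ,
      (∀ α : Fin d, (∑ β : Fin (dx α), mx' ⟨α, β⟩) = (-(g α)).toNat) ∧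
      (∑ s, mx' s • b s.1 s.2) = (∑ s, mx s • b s.1 s.2)) :
    ∀ my : (Σ α : Fin d, Fin (dy α)) →₀ ℕ,
      (∀ α : Fin d, (∑ γ : Fin (dy α), my ⟨α, γ⟩) = (-(g α)).toNat) →
      ∃ mz : (Σ α : Fin d, Fin (dx α) × Fin (dy α)) →₀ ℕ,
        graverGen K b c mx my =
          psiTFP K dx dy (toricIdeal K (fun s : Σ α : Fin d, Fin (dx α) => b s.1 s.2))
            (toricIdeal K (fun s : Σ α : Fin d, Fin (dy α) => c s.1 s.2))
            (monomial mz 1) :=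
  graverGen_product_of_simple_of_symmetric_general K b c g mx hsym
end
end
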